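/- The triangular gauge d_φ is a pseudo-metric on Ω: for all a, b, c ∈ Ω one has d_φ(a,a) = 0, d_φ(a,b) = d_φ(b,a), and d_φ(a,c) ≤ d_φ(a,b) + d_φ(b,c). -/

import Mathlib

open scoped BigOperators

/-- The set of weighted chain costs from `a` to `b`: a chain `a = c 0, c 1, …, c n = b`
with `n ≥ 1`, consecutive elements distinct (except that the single-edge chain `n = 1`
is always allowed, even when `a = b`), contributes the cost
`W n * ∑_{i<n} φ (c i) (c (i+1))`. -/
def gaugeSet {Ω : Type*} (φ : Ω → Ω → ℝ) (W : ℕ → ℝ) (a b : Ω) : Set ℝ :=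
  {x | ∃ n : ℕ, 1 ≤ n ∧ ∃ c : ℕ → Ω, c 0 = a ∧ c n = b ∧
    (n = 1 ∨ ∀ i < n, c i ≠ c (i + 1)) ∧
    x = W n * ∑ i ∈ Finset.range n, φ (c i) (c (i + 1))}

/-- The triangular gauge of the proximity function `φ` with weights `W`. -/
noncomputable def dGauge {Ω : Type*} (φ : Ω → Ω → ℝ) (W : ℕ → ℝ) (a b : Ω) : ℝ :=
  sInf (gaugeSet φ W a b)

/-!
Reversing a chain preserves its length and, `φ` being symmetric, its cost, so `d_φ` is
symmetric. The single edge `a, a` costs `W 1 * φ a a = 0`, so `d_φ(a, a) = 0`. For the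
triangle inequality we may then assume `a ≠ b` and `b ≠ c`, which makes the single-edge
exception irrelevant: concatenating a chain from `a` to `b` of length `n` with one from `b`
to `c` of length `m` keeps consecutive points distinct, and since `W`
is non-increasing and `φ ≥ 0`, the cost `W (n + m) * (S₁ + S₂)` is at most
`W n * S₁ + W m * S₂`. Taking infima gives the claim.
-/

open Finset

section Chains

variable {Ω M : Type*} [AddCommMonoid M]

def chainAppend (c₁ : ℕ → Ω) (n : ℕ) (c₂ : ℕ → Ω) : ℕ → Ω :=
  fun i => if i < n then c₁ i else c₂ (i - n)

lemma chainAppend_of_le {c₁ c₂ : ℕ → Ω} {n i : ℕ} (h : c₁ n = c₂ 0) (hi : i ≤ n) :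
    chainAppend c₁ n c₂ i = c₁ i := by
  rcases hi.lt_or_eq with hi | rfl
  · simp [chainAppend, hi]
  · simp [chainAppend, h]

lemma chainAppend_add (c₁ c₂ : ℕ → Ω) (n j : ℕ) : chainAppend c₁ n c₂ (n + j) = c₂ j := by
  simp [chainAppend]

lemma sum_range_chainAppend (f : Ω → Ω → M) {c₁ c₂ : ℕ → Ω} {n : ℕ} (h : c₁ n = c₂ 0)
    (m : ℕ) :
    ∑ i ∈ range (n + m), f (chainAppend c₁ n c₂ i) (chainAppend c₁ n c₂ (i + 1)) =
      ∑ i ∈ range n, f (c₁ i) (c₁ (i + 1)) + ∑ j ∈ range m, f (c₂ j) (c₂ (j + 1)) := by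
  rw [sum_range_add]
  congr 1
  · refine sum_congr rfl fun i hi => ?_
    have hi : i < n := mem_range.mp hi
    rw [chainAppend_of_le h hi.le, chainAppend_of_le h hi]
  · refine sum_congr rfl fun j _ => ?_
    rw [add_assoc, chainAppend_add, chainAppend_add]

lemma chainAppend_ne_succ {c₁ c₂ : ℕ → Ω} {n m : ℕ} (h : c₁ n = c₂ 0)
    (h₁ : ∀ i < n, c₁ i ≠ c₁ (i + 1)) (h₂ : ∀ j < m, c₂ j ≠ c₂ (j + 1)) :
    ∀ i < n + m, chainAppend c₁ n c₂ i ≠ chainAppend c₁ n c₂ (i + 1) := by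
  intro i hi
  rcases lt_or_ge i n with hin | hni
  · rw [chainAppend_of_le h hin.le, chainAppend_of_le h hin]
    exact h₁ i hin
  · obtain ⟨j, rfl⟩ := Nat.exists_eq_add_of_le hni
    rw [add_assoc, chainAppend_add, chainAppend_add]
    exact h₂ j (by omega)

lemma sum_range_reverse (f : Ω → Ω → M) (c : ℕ → Ω) (n : ℕ) :
    ∑ i ∈ range n, f (c (n - i)) (c (n - (i + 1))) = ∑ i ∈ range n, f (c (i + 1)) (c i) := by
  rw [← sum_range_reflect]
  refine sum_congr rfl fun i hi => ?_
  have hi : i < n := mem_range.mp hi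
  congr 2 <;> omega

lemma reverse_ne_succ {c : ℕ → Ω} {n : ℕ} (hc : ∀ i < n, c i ≠ c (i + 1)) :
    ∀ i < n, c (n - i) ≠ c (n - (i + 1)) := by
  intro i hi
  have := hc (n - (i + 1)) (by omega)
  rwa [show n - (i + 1) + 1 = n - i by omega, ne_comm] at this

lemma forall_ne_succ_of_ne {c : ℕ → Ω} {n : ℕ} (hc : n = 1 ∨ ∀ i < n, c i ≠ c (i + 1))
    (hne : c 0 ≠ c n) : ∀ i < n, c i ≠ c (i + 1) := by
  rcases hc with rfl | hc
  · intro i hi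
    obtain rfl : i = 0 := by omega
    exact hne
  · exact hc

end Chains

section Gauge

variable {Ω : Type*} {φ : Ω → Ω → ℝ} {W : ℕ → ℝ}

lemma mul_mem_gaugeSet (φ : Ω → Ω → ℝ) (W : ℕ → ℝ) (a b : Ω) :
    W 1 * φ a b ∈ gaugeSet φ W a b :=
  ⟨1, le_rfl, fun i => if i = 0 then a else b, rfl, rfl, Or.inl rfl, by simp⟩

lemma gaugeSet_nonempty (φ : Ω → Ω → ℝ) (W : ℕ → ℝ) (a b : Ω) :
    (gaugeSet φ W a b).Nonempty :=
  ⟨_, mul_mem_gaugeSet φ W a b⟩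

lemma nonneg_of_mem_gaugeSet (hφ : ∀ a b, 0 ≤ φ a b) (hW : ∀ i, 1 ≤ i → 0 < W i)
    {a b : Ω} {x : ℝ} (hx : x ∈ gaugeSet φ W a b) : 0 ≤ x := by
  obtain ⟨n, hn, c, -, -, -, rfl⟩ := hx
  exact mul_nonneg (hW n hn).le (sum_nonneg fun i _ => hφ _ _)

lemma bddBelow_gaugeSet (hφ : ∀ a b, 0 ≤ φ a b) (hW : ∀ i, 1 ≤ i → 0 < W i) (a b : Ω) :
    BddBelow (gaugeSet φ W a b) :=
  ⟨0, fun _ => nonneg_of_mem_gaugeSet hφ hW⟩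

lemma gaugeSet_subset_swap (hφ : ∀ a b, φ a b = φ b a) (a b : Ω) :
    gaugeSet φ W a b ⊆ gaugeSet φ W b a := by
  rintro x ⟨n, hn, c, rfl, rfl, hc, rfl⟩
  refine ⟨n, hn, fun i => c (n - i), by simp, by simp, hc.imp_right reverse_ne_succ, ?_⟩
  simp only [sum_range_reverse, hφ (c (_ + 1))]

lemma gaugeSet_comm (hφ : ∀ a b, φ a b = φ b a) (a b : Ω) :
    gaugeSet φ W a b = gaugeSet φ W b a :=
  (gaugeSet_subset_swap hφ a b).antisymm (gaugeSet_subset_swap hφ b a)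

lemma dGauge_comm (hφ : ∀ a b, φ a b = φ b a) (a b : Ω) :
    dGauge φ W a b = dGauge φ W b a := by
  rw [dGauge, gaugeSet_comm hφ]; rfl

lemma dGauge_self (hφ_nonneg : ∀ a b, 0 ≤ φ a b) (hφ_refl : ∀ a, φ a a = 0)
    (hW_pos : ∀ i, 1 ≤ i → 0 < W i) (a : Ω) : dGauge φ W a a = 0 := by
  refine le_antisymm ?_ (Real.sInf_nonneg fun _ => nonneg_of_mem_gaugeSet hφ_nonneg hW_pos)
  simpa [dGauge, hφ_refl] using csInf_le (bddBelow_gaugeSet hφ_nonneg hW_pos a a)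
    (mul_mem_gaugeSet φ W a a)

lemma exists_mem_gaugeSet_le_add (hφ : ∀ a b, 0 ≤ φ a b)
    (hW : ∀ i j, 1 ≤ i → i ≤ j → W j ≤ W i) {a b c : Ω} (hab : a ≠ b) (hbc : b ≠ c)
    {x y : ℝ} (hx : x ∈ gaugeSet φ W a b) (hy : y ∈ gaugeSet φ W b c) :
    ∃ z ∈ gaugeSet φ W a c, z ≤ x + y := by
  obtain ⟨n, hn, c₁, rfl, rfl, hc₁, rfl⟩ := hx
  obtain ⟨m, hm, c₂, hc₂0, rfl, hc₂, rfl⟩ := hy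
  have hjoin : c₁ n = c₂ 0 := hc₂0.symm
  have hc₁ := forall_ne_succ_of_ne hc₁ hab
  have hc₂ := forall_ne_succ_of_ne hc₂ (hc₂0 ▸ hbc)
  refine ⟨_, ⟨n + m, by omega, chainAppend c₁ n c₂, chainAppend_of_le hjoin n.zero_le,
    chainAppend_add c₁ c₂ n m, Or.inr (chainAppend_ne_succ hjoin hc₁ hc₂), rfl⟩, ?_⟩
  rw [sum_range_chainAppend φ hjoin, mul_add]
  gcongr
  · exact sum_nonneg fun i _ => hφ _ _
  · exact hW n (n + m) hn (by omega)
  · exact sum_nonneg fun i _ => hφ _ _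
  · exact hW m (n + m) hm (by omega)

open Pointwise in
lemma dGauge_triangle (hφ_nonneg : ∀ a b, 0 ≤ φ a b) (hφ_refl : ∀ a, φ a a = 0)
    (hW_pos : ∀ i, 1 ≤ i → 0 < W i) (hW_antitone : ∀ i j, 1 ≤ i → i ≤ j → W j ≤ W i)
    (a b c : Ω) : dGauge φ W a c ≤ dGauge φ W a b + dGauge φ W b c := by
  rcases eq_or_ne a b with rfl | hab
  · rw [dGauge_self hφ_nonneg hφ_refl hW_pos, zero_add]
  rcases eq_or_ne b c with rfl | hbc
  · rw [dGauge_self hφ_nonneg hφ_refl hW_pos, add_zero]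
  have hbdd := bddBelow_gaugeSet hφ_nonneg hW_pos (W := W)
  unfold dGauge
  rw [← csInf_add (gaugeSet_nonempty φ W a b) (hbdd a b)
    (gaugeSet_nonempty φ W b c) (hbdd b c)]
  refine le_csInf ((gaugeSet_nonempty φ W a b).add (gaugeSet_nonempty φ W b c)) ?_
  rintro _ ⟨x, hx, y, hy, rfl⟩
  obtain ⟨z, hz, hzxy⟩ := exists_mem_gaugeSet_le_add hφ_nonneg hW_antitone hab hbc hx hy
  exact (csInf_le (hbdd a c) hz).trans hzxy

end Gauge

theorem dGauge_pseudometric_general {Ω : Type*}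
    (φ : Ω → Ω → ℝ) (W : ℕ → ℝ)
    (hφ_nonneg : ∀ a b, 0 ≤ φ a b)
    (hφ_symm : ∀ a b, φ a b = φ b a)
    (hφ_refl : ∀ a, φ a a = 0)
    (hW_pos : ∀ i, 1 ≤ i → 0 < W i)
    (hW_antitone : ∀ i j, 1 ≤ i → i ≤ j → W j ≤ W i) :
    ∀ a b c : Ω,
      dGauge φ W a a = 0 ∧
      dGauge φ W a b = dGauge φ W b a ∧
      dGauge φ W a c ≤ dGauge φ W a b + dGauge φ W b c :=
  fun a b c => ⟨dGauge_self hφ_nonneg hφ_refl hW_pos a, dGauge_comm hφ_symm a b,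
    dGauge_triangle hφ_nonneg hφ_refl hW_pos hW_antitone a b c⟩

/-- The triangular gauge `d_φ` is a pseudo-metric on `Ω`. -/
theorem dGauge_pseudometric {Ω : Type*} [Nonempty Ω]
    (φ : Ω → Ω → ℝ) (W : ℕ → ℝ)
    (hφ_nonneg : ∀ a b, 0 ≤ φ a b)
    (hφ_symm : ∀ a b, φ a b = φ b a)
    (hφ_refl : ∀ a, φ a a = 0)
    (hW_pos : ∀ i, 1 ≤ i → 0 < W i)
    (hW_le_one : ∀ i, 1 ≤ i → W i ≤ 1)
    (hW_antitone : ∀ i j, 1 ≤ i → i ≤ j → W j ≤ W i) :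
    ∀ a b c : Ω,
      dGauge φ W a a = 0 ∧
      dGauge φ W a b = dGauge φ W b a ∧
      dGauge φ W a c ≤ dGauge φ W a b + dGauge φ W b c :=
  dGauge_pseudometric_general φ W hφ_nonneg hφ_symm hφ_refl hW_pos hW_antitone
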